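/- For a decomposable graph G, the edge count satisfies |E(G)| = ∑_{C ∈ 𝒞(G)} C(|C|,2) − ∑_{S ∈ 𝒮(G)} C(|S|,2), where the second sum is over the separator multiset of any junction tree of G. -/

import Mathlib

open scoped Classical BigOperators

/-- A graph is decomposable (chordal) if it has no induced cycle of length at least 4. -/
def Chordal {V : Type*} (G : SimpleGraph V) : Prop :=
  ¬ ∃ (n : ℕ) (f : ZMod n ↪ V), 4 ≤ n ∧
      ∀ i j : ZMod n, G.Adj (f i) (f j) ↔ (i = j + 1 ∨ j = i + 1)

/-- `C` is a maximal clique (a "clique" in the terminology of the paper) of `G`. -/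
def MaxClique {V : Type*} (G : SimpleGraph V) (C : Set V) : Prop :=
  G.IsClique C ∧ ∀ D, G.IsClique D → C ⊆ D → C = D

/-- `C` is a maximal complete subset of the subgraph of `G` induced on `A`,
i.e. a clique of `G_A`. -/
def MaxCliqueIn {V : Type*} (G : SimpleGraph V) (A C : Set V) : Prop :=
  C ⊆ A ∧ G.IsClique C ∧ ∀ D, D ⊆ A → G.IsClique D → C ⊆ D → C = D

/-- `(A,B)` is a decomposition of `G`: it covers the vertex set, `A ∩ B` is complete
and `A ∩ B` separates `A \ B` from `B \ A`. -/
def IsDecomposition {V : Type*} (G : SimpleGraph V) (A B : Set V) : Prop :=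
  A ∪ B = Set.univ ∧ G.IsClique (A ∩ B) ∧
    ∀ u ∈ A \ B, ∀ v ∈ B \ A, ∀ p : G.Walk u v, ∃ w ∈ A ∩ B, w ∈ p.support

/-- The graph `G⟨A₁,…,A_k⟩` on `V` that is complete on each member of `𝒜` and
has no other edges. -/
def coverGraph {V : Type*} (𝒜 : Set (Set V)) : SimpleGraph V where
  Adj u v := u ≠ v ∧ ∃ A ∈ 𝒜, u ∈ A ∧ v ∈ A
  symm := ⟨by
    rintro u v ⟨huv, A, hA, hu, hv⟩
    exact ⟨huv.symm, A, hA, hv, hu⟩⟩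
  loopless := ⟨by rintro v ⟨hv, -⟩; exact hv rfl⟩

/-- Total mass that the density `π` puts on a set of graphs. -/
noncomputable def mass {V : Type*} (π : SimpleGraph V → ℝ) (S : Set (SimpleGraph V)) : ℝ :=
  ∑ᶠ G ∈ S, π G

/-- `𝔘*(A,B)`: decomposable graphs for which `(A,B)` is a decomposition and
`A ∩ B` is a clique (maximal complete subgraph) of `G_A`. -/
def Ustar {V : Type*} (A B : Set V) : Set (SimpleGraph V) :=
  {G | Chordal G ∧ IsDecomposition G A B ∧ MaxCliqueIn G A (A ∩ B)}

/-- The weak structural Markov property: for every covering pair `(A,B)`,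
the induced subgraphs `G_A` and `G_B` are independent conditionally on
`G ∈ 𝔘*(A,B)`. -/
def WeaklyStructurallyMarkov {V : Type*} (π : SimpleGraph V → ℝ) : Prop :=
  ∀ A B : Set V, A ∪ B = Set.univ →
    ∀ H₁ ∈ Ustar A B, ∀ H₂ ∈ Ustar A B,
      mass π {G ∈ Ustar A B |
            G.induce A = H₁.induce A ∧ G.induce B = H₂.induce B} *
          mass π (Ustar A B) =
        mass π {G ∈ Ustar A B | G.induce A = H₁.induce A} *
          mass π {G ∈ Ustar A B | G.induce B = H₂.induce B}

/-- `π` is the density of a graph law on the set of decomposable graphs on `V`. -/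
def IsGraphLaw {V : Type*} [Fintype V] (π : SimpleGraph V → ℝ) : Prop :=
  (∀ G, 0 ≤ π G) ∧ (∀ G, ¬ Chordal G → π G = 0) ∧ ∑ᶠ G : SimpleGraph V, π G = 1

/-- `π` has full support on the decomposable graphs. -/
def FullSupport {V : Type*} (π : SimpleGraph V → ℝ) : Prop :=
  ∀ G, Chordal G → 0 < π G

/-- A junction tree for `G`: a tree on the maximal cliques of `G` such that the
cliques containing any fixed vertex form a connected subtree. -/
structure JunctionTree {V : Type*} (G : SimpleGraph V) where
  J : ℕ
  clique : Fin J → Set V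
  clique_inj : Function.Injective clique
  clique_max : ∀ i, MaxClique G (clique i)
  clique_surj : ∀ C, MaxClique G C → ∃ i, clique i = C
  T : SimpleGraph (Fin J)
  isTree : T.IsTree
  junction : ∀ v : V, ((T.induce {i | v ∈ clique i}).Connected)

/-- The separator associated with an (unordered) edge of a junction tree. -/
def JunctionTree.sep {V : Type*} {G : SimpleGraph V} (JT : JunctionTree G) :
    Sym2 (Fin JT.J) → Set V :=
  Sym2.lift ⟨fun i j => JT.clique i ∩ JT.clique j, fun i j => Set.inter_comm _ _⟩

/-- `π` is a clique–separator factorisation law: its density is proportional to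
`∏_C φ_C / ∏_S ψ_S` over the cliques and separators of `G`. -/
def IsCSFLaw {V : Type*} (π : SimpleGraph V → ℝ) : Prop :=
  ∃ (φ ψ : Set V → ℝ) (c : ℝ), (∀ A, 0 < φ A) ∧ (∀ A, 0 < ψ A) ∧ 0 < c ∧
    ∀ G : SimpleGraph V, Chordal G → ∀ JT : JunctionTree G,
      π G = c * (∏ i : Fin JT.J, φ (JT.clique i)) /
        ∏ᶠ e ∈ JT.T.edgeSet, ψ (JT.sep e)

/-- The union of the cliques visited before step `j`. -/
def priorUnion {V : Type*} {J : ℕ} (f : Fin J → Set V) (j : Fin J) : Set V :=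
  ⋃ i ∈ {i : Fin J | i < j}, f i

/-- `f` is a pluperfect ordering of the (maximal) cliques of `G`: at each step the
clique chosen is available and its separator is not a proper subset of the
separator of any other available clique. -/
def PluperfectOrdering {V : Type*} (G : SimpleGraph V) {J : ℕ} (f : Fin J → Set V) : Prop :=
  Function.Injective f ∧ (∀ i, MaxClique G (f i)) ∧ (∀ C, MaxClique G C → ∃ i, f i = C) ∧
  ∀ j : Fin J, (j : ℕ) ≠ 0 →
    (∃ i < j, f j ∩ priorUnion f j ⊆ f i) ∧
    ∀ k : Fin J, j ≤ k → (∃ i < j, f k ∩ priorUnion f j ⊆ f i) →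
      ¬ f j ∩ priorUnion f j ⊂ f k ∩ priorUnion f j

/-!
Count pairs `z = {u, v}` of distinct vertices. The cliques containing `z` are the nodes of the
intersection of the subtrees of the junction tree belonging to `u` and `v`; this intersection is
nonempty exactly when `uv` is an edge (every edge lies in a maximal clique), and is then itself a
subtree, so it has one node more than edges. Its edges are exactly the tree edges whose separator
contains `z`. Hence `[z ∈ E] = #{cliques ⊇ z} - #{separators ⊇ z}`, and summing over `z` and
exchanging the order of summation gives the identity.
-/

open Finset SimpleGraph

lemma Finset.card_filter_not_isDiag_sym2 {α : Type*} (s : Finset α) :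
    #{z ∈ s.sym2 | ¬z.IsDiag} = (#s).choose 2 := by
  rw [sym2_eq_image, Sym2.filter_image_mk_not_isDiag, Sym2.card_image_offDiag]

lemma Set.card_filter_not_isDiag_mem_sym2 {α : Type*} [Fintype α] (A : Set α) :
    #{z : Sym2 α | ¬z.IsDiag ∧ z ∈ A.sym2} = A.ncard.choose 2 := by
  rw [Set.ncard_eq_toFinset_card', ← Finset.card_filter_not_isDiag_sym2]
  congr 1
  ext z
  have hmem : z ∈ A.toFinset.sym2 ↔ z ∈ A.sym2 := by
    rw [← Finset.mem_coe, Finset.coe_sym2, Set.coe_toFinset]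
  simp [hmem, and_comm]

lemma SimpleGraph.exists_maxClique_superset {V : Type*} [Finite V] {G : SimpleGraph V}
    {C : Set V} (hC : G.IsClique C) : ∃ D, MaxClique G D ∧ C ⊆ D := by
  obtain ⟨D, ⟨hD, hCD⟩, hmax⟩ :=
    (Set.toFinite {D : Set V | G.IsClique D ∧ C ⊆ D}).exists_maximalFor id _ ⟨C, hC, le_rfl⟩
  exact ⟨D, ⟨hD, fun E hE hDE => le_antisymm hDE (hmax ⟨hE, hCD.trans hDE⟩ hDE)⟩, hCD⟩

namespace SimpleGraph

variable {ι : Type*} {T : SimpleGraph ι}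

lemma Preconnected.exists_isPath_support_subset {s : Set ι}
    (hs : (T.induce s).Preconnected) {x y : ι} (hx : x ∈ s) (hy : y ∈ s) :
    ∃ p : T.Walk x y, p.IsPath ∧ ∀ z ∈ p.support, z ∈ s := by
  obtain ⟨w⟩ := hs ⟨x, hx⟩ ⟨y, hy⟩
  refine ⟨w.bypass.map (Embedding.induce s).toHom,
    w.bypass_isPath.map (Embedding.induce (G := T) s).injective, ?_⟩
  intro z hz
  obtain ⟨z, -, rfl⟩ := List.mem_map.1 (Walk.support_map _ w.bypass ▸ hz)
  exact z.2

lemma IsTree.connected_induce_inter (hT : T.IsTree) {s t : Set ι}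
    (hs : (T.induce s).Connected) (ht : (T.induce t).Connected) (hst : (s ∩ t).Nonempty) :
    (T.induce (s ∩ t)).Connected := by
  have := hst.to_subtype
  refine Connected.mk fun ⟨x, hxs, hxt⟩ ⟨y, hys, hyt⟩ => ?_
  obtain ⟨p, hp, hps⟩ := hs.preconnected.exists_isPath_support_subset hxs hys
  obtain ⟨q, hq, hqt⟩ := ht.preconnected.exists_isPath_support_subset hxt hyt
  obtain rfl : p = q := (hT.existsUnique_path x y).unique hp hq
  exact ⟨p.induce (s ∩ t) fun z hz => ⟨hps z hz, hqt z hz⟩⟩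

lemma IsTree.card_edgeFinset_inter_sym2_add_one [Fintype ι] [DecidableEq ι] [DecidableRel T.Adj]
    (hT : T.IsTree) {s : Set ι} [DecidablePred (· ∈ s)] (hs : (T.induce s).Connected) :
    #(T.edgeFinset ∩ s.toFinset.sym2) + 1 = #s.toFinset := by
  rw [← map_edgeFinset_induce, card_map, Set.toFinset_card]
  exact IsTree.card_edgeFinset ⟨hs, hT.isAcyclic.induce s⟩

end SimpleGraph

namespace JunctionTree

variable {V : Type*} {G : SimpleGraph V} (JT : JunctionTree G)

def cliquesContaining (z : Sym2 V) : Set (Fin JT.J) := {i | z ∈ (JT.clique i).sym2}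

lemma mem_sym2_sep_iff (z : Sym2 V) (e : Sym2 (Fin JT.J)) :
    z ∈ (JT.sep e).sym2 ↔ e ∈ (JT.cliquesContaining z).sym2 := by
  induction e using Sym2.ind with
  | _ i j =>
    rw [sep, Sym2.lift_mk, Set.sym2_inter, Set.mk_mem_sym2_iff]
    exact Iff.rfl

lemma connected_induce_cliquesContaining {z : Sym2 V} (hz : (JT.cliquesContaining z).Nonempty) :
    (JT.T.induce (JT.cliquesContaining z)).Connected := by
  induction z using Sym2.ind with
  | _ u v => exact JT.isTree.connected_induce_inter (JT.junction u) (JT.junction v) hz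

lemma cliquesContaining_nonempty_iff [Finite V] {z : Sym2 V} (hz : ¬z.IsDiag) :
    (JT.cliquesContaining z).Nonempty ↔ z ∈ G.edgeSet := by
  induction z using Sym2.ind with
  | _ u v =>
    constructor
    · rintro ⟨i, hu, hv⟩
      exact (JT.clique_max i).1 hu hv hz
    · intro hadj
      obtain ⟨D, hD, hsub⟩ := exists_maxClique_superset (isClique_pair.2 fun _ => hadj)
      obtain ⟨i, rfl⟩ := JT.clique_surj D hD
      exact ⟨i, hsub (by simp), hsub (by simp)⟩

lemma card_cliques_sub_card_separators_eq_ite [Fintype V] {z : Sym2 V} (hz : ¬z.IsDiag) :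
    (#{i | z ∈ (JT.clique i).sym2} : ℤ) - #{e ∈ JT.T.edgeFinset | z ∈ (JT.sep e).sym2} =
      if z ∈ G.edgeSet then 1 else 0 := by
  have hcliques : ({i | z ∈ (JT.clique i).sym2} : Finset (Fin JT.J)) =
      (JT.cliquesContaining z).toFinset := by
    ext i
    rw [mem_filter, Set.mem_toFinset]
    exact and_iff_right (mem_univ i)
  have hseps : {e ∈ JT.T.edgeFinset | z ∈ (JT.sep e).sym2} =
      JT.T.edgeFinset ∩ (JT.cliquesContaining z).toFinset.sym2 := by
    ext e
    rw [mem_filter, mem_inter, mem_sym2_sep_iff, ← Finset.mem_coe (s := Finset.sym2 _),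
      Finset.coe_sym2, Set.coe_toFinset]
  rw [hcliques, hseps]
  split_ifs with hE
  · rw [← JT.isTree.card_edgeFinset_inter_sym2_add_one
      (JT.connected_induce_cliquesContaining ((JT.cliquesContaining_nonempty_iff hz).2 hE))]
    push_cast
    ring
  · rw [Set.not_nonempty_iff_eq_empty.1 (mt (JT.cliquesContaining_nonempty_iff hz).1 hE)]
    simp

end JunctionTree

theorem edge_count_identity_general {V : Type*} [Fintype V] (G : SimpleGraph V)
    (JT : JunctionTree G) :
    (G.edgeSet.ncard : ℤ) =
      (∑ i : Fin JT.J, ((JT.clique i).ncard.choose 2 : ℤ)) -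
        ∑ᶠ e ∈ JT.T.edgeSet, ((JT.sep e).ncard.choose 2 : ℤ) := by
  set N : Finset (Sym2 V) := {z | ¬z.IsDiag}
  have hedges : G.edgeSet.ncard = #{z ∈ N | z ∈ G.edgeSet} := by
    rw [Set.ncard_eq_toFinset_card']
    congr 1
    ext z
    simpa [N] using fun h => G.not_isDiag_of_mem_edgeSet h
  calc (G.edgeSet.ncard : ℤ)
      = ∑ z ∈ N, if z ∈ G.edgeSet then 1 else 0 := by rw [sum_boole, hedges]
    _ = ∑ z ∈ N, ((#{i | z ∈ (JT.clique i).sym2} : ℤ) -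
          #{e ∈ JT.T.edgeFinset | z ∈ (JT.sep e).sym2}) :=
        sum_congr rfl fun z hz => (JT.card_cliques_sub_card_separators_eq_ite (mem_filter.1 hz).2).symm
    _ = ∑ i, (#{z ∈ N | z ∈ (JT.clique i).sym2} : ℤ) -
          ∑ e ∈ JT.T.edgeFinset, (#{z ∈ N | z ∈ (JT.sep e).sym2} : ℤ) := by
        simp only [natCast_card_filter, sum_sub_distrib]
        rw [sum_comm, sum_comm (s := N)]
    _ = _ := by
        simp only [N, filter_filter, Set.card_filter_not_isDiag_mem_sym2]
        rw [← coe_edgeFinset JT.T, finsum_mem_coe_finset]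

/-- for a decomposable graph,
`|E(G)| = ∑_{C ∈ 𝒞(G)} C(|C|,2) − ∑_{S ∈ 𝒮(G)} C(|S|,2)`. -/
theorem edge_count_identity {V : Type*} [Fintype V] (G : SimpleGraph V)
    (hG : Chordal G) (JT : JunctionTree G) :
    (G.edgeSet.ncard : ℤ) =
      (∑ i : Fin JT.J, ((JT.clique i).ncard.choose 2 : ℤ)) -
        ∑ᶠ e ∈ JT.T.edgeSet, ((JT.sep e).ncard.choose 2 : ℤ) :=
  edge_count_identity_general G JT
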